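/- arXiv:1711.06391 — 5 statements merged into one kernel-verified Lean document; each statement's English description precedes it below -/
import Mathlib

section
/- Let π and π' be two policies for a finite-horizon decision process with horizon T. Then the difference in total expected reward satisfies V(π) - V(π') = Σ_{t=1}^{T} E_{ψ_t ~ P(ψ|π,t)} [ Q^{π'}_{T-t+1}(ψ_t, π(ψ_t)) - V^{π'}_{T-t+1}(ψ_t) ], where ψ_t is the history at time t induced by rolling in with π, Q^{π'} is the action-value of π', and V^{π'} its value function. -/
open Finset

/-- Distribution over histories at (1-indexed) time `t+1` induced by rolling in with `π`,
starting from initial history distribution `ρ`, with history transition kernel `P`. -/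
noncomputable def histDist {Ψ A : Type*} [Fintype Ψ] (ρ : Ψ → ℝ) (P : Ψ → A → Ψ → ℝ)
    (π : Ψ → A) : ℕ → Ψ → ℝ
  | 0 => ρ
  | (t + 1) => fun ψ' => ∑ ψ, histDist ρ P π t ψ * P ψ (π ψ) ψ'

/-- `valFun r P π' n ψ` : expected cumulative reward of executing `π'` for `n` steps
from history `ψ`. -/
noncomputable def valFun {Ψ A : Type*} [Fintype Ψ] (r : Ψ → A → ℝ) (P : Ψ → A → Ψ → ℝ)
    (π' : Ψ → A) : ℕ → Ψ → ℝ
  | 0 => fun _ => 0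
  | (n + 1) => fun ψ => r ψ (π' ψ) + ∑ ψ', P ψ (π' ψ) ψ' * valFun r P π' n ψ'

/-- `qFun r P π' n ψ a` : one-step reward of `a` plus value-to-go of `π'` for `n-1`
further steps. -/
noncomputable def qFun {Ψ A : Type*} [Fintype Ψ] (r : Ψ → A → ℝ) (P : Ψ → A → Ψ → ℝ)
    (π' : Ψ → A) (n : ℕ) (ψ : Ψ) (a : A) : ℝ :=
  r ψ a + ∑ ψ', P ψ a ψ' * valFun r P π' (n - 1) ψ'

/-- Total expected reward of policy `π` over horizon `T`. -/
noncomputable def totalVal {Ψ A : Type*} [Fintype Ψ] (ρ : Ψ → ℝ) (P : Ψ → A → Ψ → ℝ)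
    (r : Ψ → A → ℝ) (T : ℕ) (π : Ψ → A) : ℝ :=
  ∑ t ∈ Finset.range T, ∑ ψ, histDist ρ P π t ψ * r ψ (π ψ)


lemma histDist_shift {Ψ A : Type*} [Fintype Ψ] (μ : Ψ → ℝ) (P : Ψ → A → Ψ → ℝ)
    (π : Ψ → A) (t : ℕ) :
    histDist (fun ψ' => ∑ ψ, μ ψ * P ψ (π ψ) ψ') P π t = histDist μ P π (t + 1) := by
  induction t with
  | zero => rfl
  | succ n ih => funext ψ'; simp [histDist, ih]

lemma val_as_total {Ψ A : Type*} [Fintype Ψ] (r : Ψ → A → ℝ) (P : Ψ → A → Ψ → ℝ)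
    (σ : Ψ → A) (n : ℕ) : ∀ μ : Ψ → ℝ,
    ∑ ψ, μ ψ * valFun r P σ n ψ =
      ∑ t ∈ Finset.range n, ∑ ψ, histDist μ P σ t ψ * r ψ (σ ψ) := by
  induction n with
  | zero => intro μ; simp [valFun]
  | succ n ih =>
    intro μ
    have h1 : ∑ ψ, μ ψ * valFun r P σ (n + 1) ψ =
        (∑ ψ, μ ψ * r ψ (σ ψ)) +
          ∑ ψ', (∑ ψ, μ ψ * P ψ (σ ψ) ψ') * valFun r P σ n ψ' := by
      simp only [valFun, mul_add, Finset.sum_add_distrib, Finset.mul_sum, Finset.sum_mul]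
      rw [Finset.sum_comm]
      ring_nf
    rw [h1, ih (fun ψ' => ∑ ψ, μ ψ * P ψ (σ ψ) ψ'), Finset.sum_range_succ', add_comm]
    congr 1
    refine Finset.sum_congr rfl fun t _ => ?_
    rw [histDist_shift]

/-- Performance difference lemma: `V(π) - V(π') = Σ_{t=1}^T E_{ψ_t ~ P(ψ|π,t)}
[Q^{π'}_{T-t+1}(ψ_t, π(ψ_t)) - V^{π'}_{T-t+1}(ψ_t)]` (here `t ∈ range T` is the
0-indexed timestep, so the horizon-to-go `T - t` equals `T - (t+1) + 1`). -/
theorem performance_difference {Ψ A : Type*} [Fintype Ψ] (ρ : Ψ → ℝ)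
    (P : Ψ → A → Ψ → ℝ) (r : Ψ → A → ℝ) (T : ℕ) (π π' : Ψ → A) :
    totalVal ρ P r T π - totalVal ρ P r T π' =
      ∑ t ∈ Finset.range T, ∑ ψ, histDist ρ P π t ψ *
        (qFun r P π' (T - t) ψ (π ψ) - valFun r P π' (T - t) ψ) := by
  set W : ℕ → ℝ := fun t => ∑ ψ, histDist ρ P π t ψ * valFun r P π' (T - t) ψ with hW
  have key : ∀ t ∈ Finset.range T,
      (∑ ψ, histDist ρ P π t ψ *
        (qFun r P π' (T - t) ψ (π ψ) - valFun r P π' (T - t) ψ)) =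
      (∑ ψ, histDist ρ P π t ψ * r ψ (π ψ)) + (W (t + 1) - W t) := by
    intro t ht
    rw [Finset.mem_range] at ht
    obtain ⟨m, hm⟩ : ∃ m, T - t = m + 1 := ⟨T - t - 1, by omega⟩
    have hm' : T - (t + 1) = m := by omega
    have hmid : ∑ ψ, histDist ρ P π t ψ *
        (∑ ψ', P ψ (π ψ) ψ' * valFun r P π' m ψ') = W (t + 1) := by
      simp only [hW, hm', histDist, Finset.mul_sum, Finset.sum_mul]
      rw [Finset.sum_comm]
      ring_nf
    simp only [hW, hm, qFun, valFun, Nat.add_sub_cancel, mul_sub, mul_add,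
      Finset.sum_sub_distrib, Finset.sum_add_distrib]
    rw [hmid]
    simp only [hW, hm, valFun, mul_add, Finset.sum_add_distrib]
    ring
  rw [Finset.sum_congr rfl key, Finset.sum_add_distrib, Finset.sum_range_sub]
  have hWT : W T = 0 := by simp [hW, valFun]
  have hW0 : W 0 = totalVal ρ P r T π' := by
    simp only [hW, Nat.sub_zero, histDist, totalVal]
    exact val_as_total r P π' T ρ
  rw [hWT, hW0]
  simp only [totalVal]
  ring
end

section
/- For the mixing schedule β_i = (1-α)^{i-1} with α ∈ (0,1), the sum Σ_{i=1}^{N} min(1, T·β_i) is at most (log T + 2)/α, for any integers N ≥ 1 and T ≥ 1. -/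
open Finset

/-!
Put `r = 1 - α`. Past the cut-off `m = ⌈log T / α⌉₊` we have `T rᵐ ≤ T e^{-αm} ≤ 1`, so the first
`m ≤ log T / α + 1` terms are each at most `1`, and the remaining ones are bounded by the geometric
tail `T rᵐ ∑ₖ rᵏ ≤ 1 / α`.
-/

theorem sum_Icc_one_comp_sub_one {M : Type*} [AddCommMonoid M] (f : ℕ → M) (N : ℕ) :
    ∑ i ∈ Icc 1 N, f (i - 1) = ∑ i ∈ range N, f i := by
  rw [← Ico_add_one_right_eq_Icc, sum_Ico_eq_sum_range]
  simp

theorem sum_range_min_one_mul_pow_le {c r : ℝ} (hc : 0 ≤ c) (hr0 : 0 ≤ r) (hr1 : r < 1)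
    (N m : ℕ) :
    ∑ i ∈ range N, min 1 (c * r ^ i) ≤ m + c * r ^ m / (1 - r) := by
  have head : ∑ i ∈ range m, min 1 (c * r ^ i) ≤ m := by
    simpa using sum_le_card_nsmul (range m) (fun i => min (1 : ℝ) (c * r ^ i)) 1
      fun i _ => min_le_left _ _
  have tail : ∑ k ∈ range N, min 1 (c * r ^ (m + k)) ≤ c * r ^ m / (1 - r) :=
    calc ∑ k ∈ range N, min 1 (c * r ^ (m + k))
        ≤ ∑ k ∈ range N, c * r ^ m * r ^ k :=
          sum_le_sum fun k _ => by rw [pow_add, ← mul_assoc]; exact min_le_right _ _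
      _ = c * r ^ m * ∑ k ∈ Ico 0 N, r ^ k := by rw [mul_sum, range_eq_Ico]
      _ ≤ c * r ^ m * (r ^ 0 / (1 - r)) := by gcongr; exact geom_sum_Ico_le_of_lt_one hr0 hr1
      _ = c * r ^ m / (1 - r) := by ring
  calc ∑ i ∈ range N, min 1 (c * r ^ i)
      ≤ ∑ i ∈ range (m + N), min 1 (c * r ^ i) :=
        sum_le_sum_of_subset_of_nonneg (range_subset_range.2 (Nat.le_add_left N m))
          fun i _ _ => by positivity
    _ ≤ m + c * r ^ m / (1 - r) := by rw [sum_range_add]; exact add_le_add head tail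

theorem mul_one_sub_pow_le_one_of_log_le {α T : ℝ} (hα : α ≤ 1) (hT : 0 ≤ T) {m : ℕ}
    (h : Real.log T ≤ α * m) :
    T * (1 - α) ^ m ≤ 1 := by
  obtain rfl | hT_pos := hT.eq_or_lt
  · simp
  calc T * (1 - α) ^ m
      ≤ T * Real.exp (-α) ^ m := by
        gcongr
        linarith [Real.add_one_le_exp (-α)]
    _ = T * Real.exp (-(α * m)) := by rw [← Real.exp_nat_mul]; ring_nf
    _ ≤ T * Real.exp (-Real.log T) := by gcongr
    _ = 1 := by rw [Real.exp_neg, Real.exp_log hT_pos, mul_inv_cancel₀ hT_pos.ne']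

theorem sum_min_one_mul_geom_le_general (α : ℝ) (hα0 : 0 < α) (hα1 : α < 1)
    (N T : ℕ) :
    ∑ i ∈ Finset.Icc 1 N, min 1 ((T : ℝ) * (1 - α) ^ (i - 1)) ≤
      (Real.log T + 2) / α := by
  set m := ⌈Real.log T / α⌉₊
  have hm_lt : (m : ℝ) < Real.log T / α + 1 := Nat.ceil_lt_add_one (by positivity)
  have hcut : (T : ℝ) * (1 - α) ^ m ≤ 1 :=
    mul_one_sub_pow_le_one_of_log_le hα1.le T.cast_nonneg
      (by rw [mul_comm, ← div_le_iff₀ hα0]; exact Nat.le_ceil _)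
  rw [sum_Icc_one_comp_sub_one (fun i => min 1 ((T : ℝ) * (1 - α) ^ i))]
  calc ∑ i ∈ range N, min 1 ((T : ℝ) * (1 - α) ^ i)
      ≤ m + T * (1 - α) ^ m / (1 - (1 - α)) :=
        sum_range_min_one_mul_pow_le T.cast_nonneg (by linarith) (by linarith) N m
    _ ≤ (Real.log T / α + 1 / α) + 1 / α := by
        rw [sub_sub_cancel]
        gcongr
        exact hm_lt.le.trans (by gcongr; exact one_le_one_div hα0 hα1.le)
    _ = (Real.log T + 2) / α := by ring

/-- For the mixing schedule `β_i = (1-α)^(i-1)` with `α ∈ (0,1)`,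
`Σ_{i=1}^N min(1, T β_i) ≤ (log T + 2)/α` for all integers `N, T ≥ 1`. -/
theorem sum_min_one_mul_geom_le (α : ℝ) (hα0 : 0 < α) (hα1 : α < 1)
    (N T : ℕ) (hN : 1 ≤ N) (hT : 1 ≤ T) :
    ∑ i ∈ Finset.Icc 1 N, min 1 ((T : ℝ) * (1 - α) ^ (i - 1)) ≤
      (Real.log T + 2) / α :=
  sum_min_one_mul_geom_le_general α hα0 hα1 N T
end

section
/- Let π_L be a learner policy with cost-sensitive classification error ε_class = E_{t~U(1:T), ψ_t~P(ψ|π_L,t)}[ max_{a∈A} \tilde{Q}^{OR}_{T-t+1}(ψ_t,a) - \tilde{Q}^{OR}_{T-t+1}(ψ_t, π_L(ψ_t)) ] and let ε̃ = E_{t~U(1:T)}[ min_{ψ_t} ( max_{a∈A} \tilde{Q}^{OR}_{T-t+1}(ψ_t,a) - V^{OR}_{T-t+1}(ψ_t) ) ] be the local oracle suboptimality. Then V(π_L) ≥ V(π̃_OR) - T·ε_class + T·ε̃. -/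
open Finset

/-- Forward-training guarantee: if `ε_class` is the cost-sensitive classification
error of the learner `πL` on its own induced history distributions and `ε̃` is the
local oracle suboptimality, then `V(πL) ≥ V(π̃_OR) - T ε_class + T ε̃`.  Times are
0-indexed, `dist t` is the history distribution induced by `πL` at time `t`,
`Q n ψ a` and `V n ψ` are the hallucinating oracle action-value and value functions
with horizon-to-go `n`, and the performance difference lemma is the hypothesis
`hPDL`. -/
theorem forward_training_guarantee {Ψ A : Type*} [Fintype Ψ] [Fintype A]
    [Nonempty Ψ] [Nonempty A]
    (T : ℕ) (hT : 1 ≤ T)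
    (dist : ℕ → Ψ → ℝ) (hd0 : ∀ t ψ, 0 ≤ dist t ψ)
    (hd1 : ∀ t, ∑ ψ, dist t ψ = 1)
    (Q : ℕ → Ψ → A → ℝ) (V : ℕ → Ψ → ℝ) (VL VOR : ℝ) (πL : Ψ → A)
    (hPDL : VL - VOR =
      ∑ t ∈ Finset.range T, ∑ ψ, dist t ψ * (Q (T - t) ψ (πL ψ) - V (T - t) ψ))
    (εclass : ℝ)
    (hεclass : εclass = (1 / (T : ℝ)) * ∑ t ∈ Finset.range T, ∑ ψ, dist t ψ *
      ((Finset.univ.sup' Finset.univ_nonempty fun a => Q (T - t) ψ a)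
        - Q (T - t) ψ (πL ψ)))
    (εtilde : ℝ)
    (hεtilde : εtilde = (1 / (T : ℝ)) * ∑ t ∈ Finset.range T,
      Finset.univ.inf' Finset.univ_nonempty fun ψ =>
        (Finset.univ.sup' Finset.univ_nonempty fun a => Q (T - t) ψ a)
          - V (T - t) ψ) :
    VL ≥ VOR - T * εclass + T * εtilde := by
  have hTne : (T : ℝ) ≠ 0 := by positivity
  have hc : (T : ℝ) * εclass = ∑ t ∈ Finset.range T, ∑ ψ, dist t ψ *
      ((Finset.univ.sup' Finset.univ_nonempty fun a => Q (T - t) ψ a)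
        - Q (T - t) ψ (πL ψ)) := by
    rw [hεclass]; field_simp
  have ht : (T : ℝ) * εtilde = ∑ t ∈ Finset.range T,
      Finset.univ.inf' Finset.univ_nonempty fun ψ =>
        (Finset.univ.sup' Finset.univ_nonempty fun a => Q (T - t) ψ a)
          - V (T - t) ψ := by
    rw [hεtilde]; field_simp
  have key : ∀ t ∈ Finset.range T,
      (∑ ψ, dist t ψ * (Q (T - t) ψ (πL ψ) - V (T - t) ψ)) ≥
      (-(∑ ψ, dist t ψ *
        ((Finset.univ.sup' Finset.univ_nonempty fun a => Q (T - t) ψ a)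
          - Q (T - t) ψ (πL ψ)))) +
      (Finset.univ.inf' Finset.univ_nonempty fun ψ =>
        (Finset.univ.sup' Finset.univ_nonempty fun a => Q (T - t) ψ a)
          - V (T - t) ψ) := by
    intro t _
    have hsplit : (∑ ψ, dist t ψ * (Q (T - t) ψ (πL ψ) - V (T - t) ψ)) =
        (-(∑ ψ, dist t ψ *
          ((Finset.univ.sup' Finset.univ_nonempty fun a => Q (T - t) ψ a)
            - Q (T - t) ψ (πL ψ)))) +
        ∑ ψ, dist t ψ *
          ((Finset.univ.sup' Finset.univ_nonempty fun a => Q (T - t) ψ a)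
            - V (T - t) ψ) := by
      rw [← Finset.sum_neg_distrib, ← Finset.sum_add_distrib]
      congr 1; ext ψ; ring
    rw [hsplit]
    gcongr
    calc (Finset.univ.inf' Finset.univ_nonempty fun ψ =>
        (Finset.univ.sup' Finset.univ_nonempty fun a => Q (T - t) ψ a)
          - V (T - t) ψ)
        = ∑ ψ, dist t ψ * (Finset.univ.inf' Finset.univ_nonempty fun ψ =>
            (Finset.univ.sup' Finset.univ_nonempty fun a => Q (T - t) ψ a)
              - V (T - t) ψ) := by
          rw [← Finset.sum_mul, hd1, one_mul]
      _ ≤ ∑ ψ, dist t ψ *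
          ((Finset.univ.sup' Finset.univ_nonempty fun a => Q (T - t) ψ a)
            - V (T - t) ψ) := by
          apply Finset.sum_le_sum
          intro ψ _
          exact mul_le_mul_of_nonneg_left
            (Finset.inf'_le _ (Finset.mem_univ ψ)) (hd0 t ψ)
  have : VL - VOR ≥ (-(T * εclass)) + T * εtilde := by
    rw [hPDL, hc, ht, ← Finset.sum_neg_distrib, ← Finset.sum_add_distrib]
    exact Finset.sum_le_sum key
  linarith
end

section
/- (AggreVaTe-style bound combination) Suppose for each iteration i = 1,...,N the learner π_i satisfies V(π_i) - V(π̃_OR) ≥ Σ_{t=1}^T E_{ψ_t~P(ψ|π_mix^i,t)}[\tilde{Q}^{OR}_{T-t+1}(ψ_t,π_i(ψ_t)) - max_a \tilde{Q}^{OR}_{T-t+1}(ψ_t,a)] - R·T·min(1, T·β_i) + T·ε̃, where β_i = (1-α)^{i-1}. Define the average classification error ε_cs = (1/N)Σ_i E_{t~U(1:T),ψ_t~P(ψ|π_mix^i,t)}[max_a \tilde{Q}^{OR}_{T-t+1}(ψ_t,a) - \tilde{Q}^{OR}_{T-t+1}(ψ_t,π_i(ψ_t))]. Then the average learner π̄ =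 (1/N)Σπ_i satisfies V(π̄) - V(π̃_OR) ≥ -T·ε_cs - (R·T/N)·(log T + 2)/α + T·ε̃. -/
open Finset

/-!
Averaging the per-iteration bounds over `i < N` turns the cost-sensitive regret terms into
`-T ε_cs` and leaves the roll-in penalty `(R T / N) ∑ᵢ min 1 (T (1 - α)ⁱ)`. With
`n₀ = ⌈log T / α⌉` one has `T (1 - α)^n₀ ≤ T e^{-α n₀} ≤ 1`, so the first `n₀` terms of
that sum contribute at most `n₀ ≤ log T / α + 1` and the remaining ones form a geometric
series bounded by `1 / α`.
-/

namespace AggreVaTe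

variable {x α : ℝ}

theorem mul_one_sub_pow_ceil_le_one (hx : 1 ≤ x) (hα0 : 0 < α) (hα1 : α ≤ 1) :
    x * (1 - α) ^ ⌈Real.log x / α⌉₊ ≤ 1 := by
  set n := ⌈Real.log x / α⌉₊
  have hx0 : 0 < x := by linarith
  have hn : Real.log x ≤ n * α := (div_le_iff₀ hα0).mp (Nat.le_ceil _)
  have hpow : (1 - α) ^ n ≤ x⁻¹ := calc
    (1 - α) ^ n ≤ Real.exp (-α) ^ n := by
      gcongr
      exact Real.one_sub_le_exp_neg α
    _ = Real.exp (-(n * α)) := by rw [← Real.exp_nat_mul]; ring_nf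
    _ ≤ Real.exp (-Real.log x) := by gcongr
    _ = x⁻¹ := by rw [Real.exp_neg, Real.exp_log hx0]
  calc x * (1 - α) ^ n ≤ x * x⁻¹ := by gcongr
    _ = 1 := mul_inv_cancel₀ hx0.ne'

theorem sum_range_min_one_mul_pow_le (hx : 1 ≤ x) (hα0 : 0 < α) (hα1 : α ≤ 1) (N : ℕ) :
    ∑ i ∈ range N, min 1 (x * (1 - α) ^ i) ≤ (Real.log x + 2) / α := by
  set n₀ := ⌈Real.log x / α⌉₊
  set f : ℕ → ℝ := fun i => min 1 (x * (1 - α) ^ i)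
  have hf : ∀ i, 0 ≤ f i := fun i =>
    le_min zero_le_one (mul_nonneg (by linarith) (pow_nonneg (by linarith) i))
  have hhead : ∑ i ∈ range n₀, f i ≤ Real.log x / α + 1 := calc
    ∑ i ∈ range n₀, f i ≤ ∑ i ∈ range n₀, (1 : ℝ) := sum_le_sum fun i _ => min_le_left _ _
    _ = n₀ := by simp
    _ ≤ Real.log x / α + 1 :=
      (Nat.ceil_lt_add_one (div_nonneg (Real.log_nonneg hx) hα0.le)).le
  have htail : ∑ j ∈ range N, f (n₀ + j) ≤ 1 / α := calc
    ∑ j ∈ range N, f (n₀ + j) ≤ ∑ j ∈ range N, (1 - α) ^ j := sum_le_sum fun j _ => calc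
      f (n₀ + j) ≤ (x * (1 - α) ^ n₀) * (1 - α) ^ j := by
        rw [mul_assoc, ← pow_add]
        exact min_le_right _ _
      _ ≤ 1 * (1 - α) ^ j := mul_le_mul_of_nonneg_right
        (mul_one_sub_pow_ceil_le_one hx hα0 hα1) (pow_nonneg (by linarith) j)
      _ = (1 - α) ^ j := one_mul _
    _ ≤ (1 - α) ^ 0 / (1 - (1 - α)) := by
      rw [range_eq_Ico]
      exact geom_sum_Ico_le_of_lt_one (by linarith) (by linarith)
    _ = 1 / α := by simp
  calc ∑ i ∈ range N, f i ≤ ∑ i ∈ range (n₀ + N), f i :=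
        sum_le_sum_of_subset_of_nonneg (range_subset_range.2 (by omega)) fun i _ _ => hf i
    _ = ∑ i ∈ range n₀, f i + ∑ j ∈ range N, f (n₀ + j) := sum_range_add _ _ _
    _ ≤ Real.log x / α + 1 + 1 / α := add_le_add hhead htail
    _ ≤ Real.log x / α + 1 / α + 1 / α := by gcongr; exact one_le_one_div hα0 hα1
    _ = (Real.log x + 2) / α := by ring

end AggreVaTe

open AggreVaTe in
theorem aggrevate_bound_combination_general {Ψ A : Type*} [Fintype Ψ] [Fintype A]
    [Nonempty A]
    (N T : ℕ) (hN : 1 ≤ N) (hT : 1 ≤ T)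
    (α : ℝ) (hα0 : 0 < α) (hα1 : α < 1)
    (R : ℝ) (hR : 0 ≤ R)
    (dist : ℕ → ℕ → Ψ → ℝ)
    (Q : ℕ → Ψ → A → ℝ) (πi : ℕ → Ψ → A) (Vi : ℕ → ℝ) (VOR εtilde : ℝ)
    (hbound : ∀ i ∈ Finset.range N,
      Vi i - VOR ≥ (∑ t ∈ Finset.range T, ∑ ψ, dist i t ψ *
          (Q (T - t) ψ (πi i ψ) -
            Finset.univ.sup' Finset.univ_nonempty fun a => Q (T - t) ψ a))
        - R * T * min 1 ((T : ℝ) * (1 - α) ^ i) + T * εtilde)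
    (εcs : ℝ)
    (hεcs : εcs = (1 / (N : ℝ)) * ∑ i ∈ Finset.range N,
      (1 / (T : ℝ)) * ∑ t ∈ Finset.range T, ∑ ψ, dist i t ψ *
        ((Finset.univ.sup' Finset.univ_nonempty fun a => Q (T - t) ψ a)
          - Q (T - t) ψ (πi i ψ)))
    (Vavg : ℝ) (hVavg : Vavg = (1 / (N : ℝ)) * ∑ i ∈ Finset.range N, Vi i) :
    Vavg - VOR ≥ -(T : ℝ) * εcs
      - (R * T / N) * ((Real.log T + 2) / α) + T * εtilde := by
  set gap : ℕ → ℝ := fun i => ∑ t ∈ range T, ∑ ψ, dist i t ψ *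
    ((univ.sup' univ_nonempty fun a => Q (T - t) ψ a) - Q (T - t) ψ (πi i ψ))
  set m : ℕ → ℝ := fun i => min 1 ((T : ℝ) * (1 - α) ^ i)
  have hN0 : (N : ℝ) ≠ 0 := by positivity
  have hT0 : (T : ℝ) ≠ 0 := by positivity
  have hlower : ∑ i ∈ range N, (-gap i - R * T * m i + T * εtilde)
      ≤ ∑ i ∈ range N, (Vi i - VOR) := sum_le_sum fun i hi => by
    simpa only [gap, ← sum_neg_distrib, ← mul_neg, neg_sub] using hbound i hi
  have hpenalty : ∑ i ∈ range N, m i ≤ (Real.log T + 2) / α :=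
    sum_range_min_one_mul_pow_le (by exact_mod_cast hT) hα0 hα1.le N
  have hTεcs : T * εcs = 1 / N * ∑ i ∈ range N, gap i := by
    rw [hεcs]
    simp only [gap, ← mul_sum]
    field_simp
  have havg : Vavg - VOR = 1 / N * ∑ i ∈ range N, (Vi i - VOR) := by
    rw [hVavg, sum_sub_distrib, sum_const, card_range, nsmul_eq_mul]
    field_simp
  rw [sum_add_distrib, sum_sub_distrib, sum_neg_distrib, ← mul_sum, sum_const, card_range,
    nsmul_eq_mul] at hlower
  have hRT : R * T * ∑ i ∈ range N, m i ≤ R * T * ((Real.log T + 2) / α) := by gcongr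
  rw [havg, ge_iff_le, neg_mul, hTεcs]
  calc -(1 / N * ∑ i ∈ range N, gap i) - R * T / N * ((Real.log T + 2) / α) + T * εtilde
      = 1 / N * (-∑ i ∈ range N, gap i - R * T * ((Real.log T + 2) / α) + N * (T * εtilde)) := by
        field_simp
    _ ≤ 1 / N * ∑ i ∈ range N, (Vi i - VOR) := by gcongr; linarith

/-- AggreVaTe bound combination: given the per-iteration performance-difference
bounds for learners `π_i` (rolled in with mixtures `π_mix^i` using
`β_i = (1-α)^(i-1)`, here 0-indexed as `(1-α)^i`), and the definition of the
average cost-sensitive classification error `ε_cs`, the uniform mixture `π̄` of the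
learners satisfies
`V(π̄) - V(π̃_OR) ≥ -T ε_cs - (R T / N)(log T + 2)/α + T ε̃`. -/
theorem aggrevate_bound_combination {Ψ A : Type*} [Fintype Ψ] [Fintype A]
    [Nonempty Ψ] [Nonempty A]
    (N T : ℕ) (hN : 1 ≤ N) (hT : 1 ≤ T)
    (α : ℝ) (hα0 : 0 < α) (hα1 : α < 1)
    (R : ℝ) (hR : 0 ≤ R)
    (dist : ℕ → ℕ → Ψ → ℝ)
    (hd0 : ∀ i t ψ, 0 ≤ dist i t ψ) (hd1 : ∀ i t, ∑ ψ, dist i t ψ = 1)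
    (Q : ℕ → Ψ → A → ℝ) (πi : ℕ → Ψ → A) (Vi : ℕ → ℝ) (VOR εtilde : ℝ)
    (hbound : ∀ i ∈ Finset.range N,
      Vi i - VOR ≥ (∑ t ∈ Finset.range T, ∑ ψ, dist i t ψ *
          (Q (T - t) ψ (πi i ψ) -
            Finset.univ.sup' Finset.univ_nonempty fun a => Q (T - t) ψ a))
        - R * T * min 1 ((T : ℝ) * (1 - α) ^ i) + T * εtilde)
    (εcs : ℝ)
    (hεcs : εcs = (1 / (N : ℝ)) * ∑ i ∈ Finset.range N,
      (1 / (T : ℝ)) * ∑ t ∈ Finset.range T, ∑ ψ, dist i t ψ *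
        ((Finset.univ.sup' Finset.univ_nonempty fun a => Q (T - t) ψ a)
          - Q (T - t) ψ (πi i ψ)))
    (Vavg : ℝ) (hVavg : Vavg = (1 / (N : ℝ)) * ∑ i ∈ Finset.range N, Vi i) :
    Vavg - VOR ≥ -(T : ℝ) * εcs
      - (R * T / N) * ((Real.log T + 2) / α) + T * εtilde :=
  aggrevate_bound_combination_general N T hN hT α hα0 hα1 R hR dist Q πi Vi VOR εtilde hbound εcs
    hεcs Vavg hVavg
end

section
/- For any bounded function Q : A → ℝ on a finite nonempty action set A, the regret of an action chosen by regressing Q with uniform action sampling satisfies: if the expected squared regression error is ε, i.e. (1/|A|)Σ_{a∈A}(Q̂(a) - Q(a))² ≤ ε, then max_a Q(a) - Q(argmax_a Q̂(a)) ≤ 2√(|A|·ε). -/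
open Finset

/-- Reduction bound from regression to cost-sensitive classification: if the average
squared regression error of `Q̂` w.r.t. `Q` over the finite action set `A` is at most
`ε`, then the regret of the action maximizing `Q̂` is at most `2√(|A| ε)`. -/
theorem regression_to_classification_bound {A : Type*} [Fintype A] [Nonempty A]
    (Q Qhat : A → ℝ) (ε : ℝ) (hε : 0 ≤ ε)
    (hreg : (1 / (Fintype.card A : ℝ)) * ∑ a, (Qhat a - Q a) ^ 2 ≤ ε)
    (astar : A) (hastar : ∀ a, Qhat a ≤ Qhat astar) :
    (Finset.univ.sup' Finset.univ_nonempty Q) - Q astar ≤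
      2 * Real.sqrt ((Fintype.card A : ℝ) * ε) := by
  have hcard : (0 : ℝ) < (Fintype.card A : ℝ) := by
    exact_mod_cast Fintype.card_pos
  have hsum : ∑ a, (Qhat a - Q a) ^ 2 ≤ (Fintype.card A : ℝ) * ε := by
    rw [one_div, inv_mul_le_iff₀ hcard] at hreg
    linarith
  have hbound : ∀ a : A, |Qhat a - Q a| ≤ Real.sqrt ((Fintype.card A : ℝ) * ε) := by
    intro a
    have h1 : (Qhat a - Q a) ^ 2 ≤ (Fintype.card A : ℝ) * ε := by
      refine le_trans ?_ hsum
      exact Finset.single_le_sum (f := fun i => (Qhat i - Q i) ^ 2) (fun i _ => sq_nonneg _) (Finset.mem_univ a)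
    calc |Qhat a - Q a| = Real.sqrt ((Qhat a - Q a) ^ 2) := (Real.sqrt_sq_eq_abs _).symm
      _ ≤ _ := Real.sqrt_le_sqrt h1
  obtain ⟨amax, -, hamax⟩ := Finset.exists_mem_eq_sup' Finset.univ_nonempty Q
  rw [hamax]
  have h1 := abs_le.mp (hbound amax)
  have h2 := abs_le.mp (hbound astar)
  have h3 := hastar amax
  linarith [h1.1, h1.2, h2.1, h2.2]
end
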